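/- For every k ≥ 1 there exists a tournament on n = 7k vertices with at least 21^{n/7} (> 1.5448^n) minimal feedback vertex sets. -/

import Mathlib

/-- A set `W` of vertices is acyclic if the digraph `r` restricted to `W`
has no directed cycle (the transitive closure restricted to `W` is irreflexive). -/
def AcyclicOn {V : Type*} (r : V → V → Prop) (W : Set V) : Prop :=
  ∀ v : V, ¬ Relation.TransGen (fun a b => a ∈ W ∧ b ∈ W ∧ r a b) v v

/-- A tournament: an irreflexive relation with exactly one arc between
every pair of distinct vertices. -/
def IsTournament {V : Type*} (r : V → V → Prop) : Prop :=
  (∀ v : V, ¬ r v v) ∧ ∀ u v : V, u ≠ v → (r u v ↔ ¬ r v u)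

/-- A feedback vertex set: its deletion leaves an acyclic digraph. -/
def IsFVS {V : Type*} (r : V → V → Prop) (F : Set V) : Prop :=
  AcyclicOn r Fᶜ

/-- A minimal feedback vertex set. -/
def IsMinimalFVS {V : Type*} (r : V → V → Prop) (F : Set V) : Prop :=
  IsFVS r F ∧ ∀ F' : Set V, F' ⊆ F → IsFVS r F' → F' = F

/-- A feedback vertex set of the subtournament induced on `S`. -/
def IsFVSOn {V : Type*} (r : V → V → Prop) (S F : Set V) : Prop :=
  F ⊆ S ∧ AcyclicOn r (S \ F)

/-- A minimal feedback vertex set of the subtournament induced on `S`. -/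
def IsMinimalFVSOn {V : Type*} (r : V → V → Prop) (S F : Set V) : Prop :=
  IsFVSOn r S F ∧ ∀ F' : Set V, F' ⊆ F → IsFVSOn r S F' → F' = F

/-- Strong (strongly connected): a directed path between any ordered pair. -/
def IsStrong {V : Type*} (r : V → V → Prop) : Prop :=
  ∀ u v : V, Relation.ReflTransGen r u v

/-- The subtournament induced on `S` is strong. -/
def IsStrongOn {V : Type*} (r : V → V → Prop) (S : Set V) : Prop :=
  ∀ u ∈ S, ∀ v ∈ S, Relation.ReflTransGen (fun a b => a ∈ S ∧ b ∈ S ∧ r a b) u v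

/-- The score (out-degree) of a vertex. -/
noncomputable def outScore {V : Type*} (r : V → V → Prop) (v : V) : ℕ :=
  {u : V | r v u}.ncard

/-- The number of minimal feedback vertex sets of a tournament. -/
noncomputable def fvsCount (V : Type*) (r : V → V → Prop) : ℕ :=
  {F : Set V | IsMinimalFVS r F}.ncard

/-- `maxMinFVS n` = maximum number of minimal FVSs over all `n`-vertex tournaments. -/
noncomputable def maxMinFVS (n : ℕ) : ℕ :=
  sSup {k : ℕ | ∃ r : Fin n → Fin n → Prop, IsTournament r ∧ fvsCount (Fin n) r = k}


/-!
A set of vertices of a sequential composition is acyclic exactly when each of its slices is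
acyclic in the corresponding copy, since a directed cycle cannot leave a copy and come back.
Choosing a maximal acyclic set in every copy independently therefore yields a maximal acyclic set
of the composition, and complements of maximal acyclic sets are the minimal feedback vertex sets.
In the Paley tournament `ST_7` the 21 transitive triples are maximal acyclic: every other vertex
closes a directed triangle with two of their vertices.
-/

open Relation Function

section Acyclic

variable {V W : Type*} {r : V → V → Prop}

theorem AcyclicOn.mono {S T : Set V} (hT : AcyclicOn r T) (hST : S ⊆ T) : AcyclicOn r S :=
  fun v hv => hT v <| TransGen.mono (fun _ _ ⟨ha, hb, hab⟩ => ⟨hST ha, hST hb, hab⟩) _ _ hv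

theorem acyclicOn_of_rank {α : Type*} [Preorder α] {S : Set V} (g : V → α)
    (hg : ∀ a ∈ S, ∀ b ∈ S, r a b → g a < g b) : AcyclicOn r S := by
  intro v hv
  have hlt : TransGen (· < ·) (g v) (g v) :=
    TransGen.lift g (fun a b ⟨ha, hb, hab⟩ => hg a ha b hb hab) v v hv
  rw [transGen_eq_self] at hlt
  exact lt_irrefl _ hlt

theorem not_acyclicOn_of_triangle {S : Set V} {x y z : V} (hx : x ∈ S) (hy : y ∈ S) (hz : z ∈ S)
    (hxy : r x y) (hyz : r y z) (hzx : r z x) : ¬ AcyclicOn r S :=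
  fun h => h x <| .tail (.tail (.single ⟨hx, hy, hxy⟩) ⟨hy, hz, hyz⟩) ⟨hz, hx, hzx⟩

theorem acyclicOn_preimage_equiv_iff (e : V ≃ W) {r : W → W → Prop} {S : Set V} :
    AcyclicOn (e ⁻¹'o r) S ↔ AcyclicOn r (e '' S) := by
  constructor
  · intro h w hw
    refine h (e.symm w) <| TransGen.lift e.symm (fun a b hab => ?_) w w hw
    obtain ⟨⟨a, ha, rfl⟩, ⟨b, hb, rfl⟩, hab⟩ := hab
    simpa [onFun, Order.Preimage] using ⟨ha, hb, hab⟩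
  · intro h v hv
    exact h (e v) <| TransGen.lift e (fun a b ⟨ha, hb, hab⟩ =>
      ⟨Set.mem_image_of_mem e ha, Set.mem_image_of_mem e hb, hab⟩) v v hv

end Acyclic

section FVS

variable {V W : Type*} {r : V → V → Prop}

theorem maximal_acyclicOn_iff {S : Set V} :
    Maximal (AcyclicOn r) S ↔ AcyclicOn r S ∧ ∀ v ∉ S, ¬ AcyclicOn r (insert v S) :=
  Set.maximal_iff_forall_insert fun _ _ hT hST => hT.mono hST

theorem isMinimalFVS_compl_iff {S : Set V} : IsMinimalFVS r Sᶜ ↔ Maximal (AcyclicOn r) S := by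
  rw [IsMinimalFVS, IsFVS, compl_compl]
  refine and_congr_right fun _ => ⟨fun h T hT hST => ?_, fun h F hFS hF => ?_⟩
  · exact (compl_inj_iff.1 (h Tᶜ (Set.compl_subset_compl.2 hST) (by rwa [IsFVS, compl_compl]))).le
  · exact hFS.antisymm (Set.compl_subset_comm.1 (h hF (Set.subset_compl_comm.1 hFS)))

theorem fvsCount_eq_ncard_maximal_acyclicOn :
    fvsCount V r = {S | Maximal (AcyclicOn r) S}.ncard := by
  have : {F | IsMinimalFVS r F} = compl '' {S | Maximal (AcyclicOn r) S} := by
    rw [Set.image_eq_preimage_of_inverse compl_compl compl_compl]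
    ext F
    rw [Set.mem_preimage, Set.mem_ofPred_eq, Set.mem_ofPred_eq, ← isMinimalFVS_compl_iff,
      compl_compl]
  rw [fvsCount, this, Set.ncard_image_of_injective _ compl_injective]

theorem fvsCount_preimage_equiv (e : V ≃ W) {r : W → W → Prop} :
    fvsCount V (e ⁻¹'o r) = fvsCount W r := by
  have hacyc : AcyclicOn (e ⁻¹'o r) = fun T => AcyclicOn r (e.symm.toOrderIsoSet.symm T) :=
    funext fun _ => propext (acyclicOn_preimage_equiv_iff e)
  rw [fvsCount_eq_ncard_maximal_acyclicOn, fvsCount_eq_ncard_maximal_acyclicOn,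
    ← Set.ncard_image_of_injective _ e.symm.toOrderIsoSet.injective,
    OrderIso.image_setOfPred_maximal, hacyc]

theorem IsTournament.preimage {r : W → W → Prop} (hr : IsTournament r) {f : V → W}
    (hf : Injective f) : IsTournament (f ⁻¹'o r) :=
  ⟨fun v => hr.1 (f v), fun u v huv => hr.2 (f u) (f v) (hf.ne huv)⟩

end FVS

section Lex

variable {ι α : Type*} {r : α → α → Prop}

abbrev seqComp (ι : Type*) [LT ι] (r : α → α → Prop) : ι × α → ι × α → Prop :=
  Prod.Lex (· < ·) r

theorem IsTournament.seqComp [LinearOrder ι] (hr : IsTournament r) :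
    IsTournament (seqComp ι r) := by
  refine ⟨fun x hx => ?_, fun x y hxy => ?_⟩
  · rcases Prod.lex_def.1 hx with h | ⟨-, h⟩
    · exact lt_irrefl _ h
    · exact hr.1 _ h
  · simp only [Prod.lex_def]
    rcases lt_trichotomy x.1 y.1 with h | h | h
    · simp [h, h.not_gt, h.ne']
    · have : x.2 ≠ y.2 := fun h2 => hxy (Prod.ext h h2)
      simp [h, hr.2 _ _ this]
    · simp [h, h.not_gt, h.ne']

theorem lt_or_transGen_slice_of_transGen_seqComp [Preorder ι] {S : Set (ι × α)} {x y : ι × α}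
    (h : TransGen (fun a b => a ∈ S ∧ b ∈ S ∧ seqComp ι r a b) x y) :
    x.1 < y.1 ∨ x.1 = y.1 ∧
      TransGen (fun a b => a ∈ Prod.mk x.1 ⁻¹' S ∧ b ∈ Prod.mk x.1 ⁻¹' S ∧ r a b) x.2 y.2 := by
  induction h with
  | single hxy =>
    obtain ⟨hx, hy, hlex⟩ := hxy
    rcases Prod.lex_def.1 hlex with h | ⟨h1, h2⟩
    · exact .inl h
    · exact .inr ⟨h1, .single ⟨hx, by rw [Set.mem_preimage, h1]; exact hy, h2⟩⟩
  | tail _ hyz ih =>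
    obtain ⟨hy, hz, hlex⟩ := hyz
    rcases Prod.lex_def.1 hlex with h | ⟨h1, h2⟩
    · exact .inl (ih.elim (fun h' => h'.trans h) fun ⟨h', _⟩ => h' ▸ h)
    · rcases ih with h' | ⟨h', hp⟩
      · exact .inl (h1 ▸ h')
      · refine .inr ⟨h'.trans h1, hp.tail ⟨?_, ?_, h2⟩⟩
        · rw [Set.mem_preimage, h']; exact hy
        · rw [Set.mem_preimage, h', h1]; exact hz

theorem AcyclicOn.slice_seqComp [Preorder ι] {S : Set (ι × α)} (h : AcyclicOn (seqComp ι r) S)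
    (i : ι) : AcyclicOn r (Prod.mk i ⁻¹' S) := fun a ha =>
  h (i, a) <| TransGen.lift (Prod.mk i)
    (fun _ _ ⟨hb, hc, hbc⟩ => ⟨hb, hc, Prod.Lex.right _ hbc⟩) a a ha

theorem acyclicOn_seqComp_iff [Preorder ι] {S : Set (ι × α)} :
    AcyclicOn (seqComp ι r) S ↔ ∀ i, AcyclicOn r (Prod.mk i ⁻¹' S) :=
  ⟨fun h => h.slice_seqComp, fun h x hx =>
    (lt_or_transGen_slice_of_transGen_seqComp hx).elim (lt_irrefl _) fun ⟨_, hc⟩ => h x.1 x.2 hc⟩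

theorem maximal_acyclicOn_seqComp [Preorder ι] {S : Set (ι × α)}
    (h : ∀ i, Maximal (AcyclicOn r) (Prod.mk i ⁻¹' S)) : Maximal (AcyclicOn (seqComp ι r)) S := by
  refine maximal_acyclicOn_iff.2
    ⟨acyclicOn_seqComp_iff.2 fun i => (h i).prop, fun ⟨i, a⟩ ha hacyc => ?_⟩
  refine (maximal_acyclicOn_iff.1 (h i)).2 a ha ((hacyc.slice_seqComp i).mono ?_)
  rintro b (rfl | hb)
  exacts [.inl rfl, .inr hb]

theorem pow_fvsCount_le_fvsCount_seqComp [Preorder ι] [Finite ι] [Finite α] :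
    fvsCount α r ^ Nat.card ι ≤ fvsCount (ι × α) (seqComp ι r) := by
  simp only [fvsCount_eq_ncard_maximal_acyclicOn, ← Nat.card_coe_set_eq]
  rw [← Nat.card_fun]
  refine Nat.card_le_card_of_injective
    (fun c => ⟨{x | x.2 ∈ (c x.1 : Set α)}, maximal_acyclicOn_seqComp fun i => (c i).2⟩) ?_
  intro c d hcd
  funext i
  ext a
  exact Set.ext_iff.1 (congrArg Subtype.val hcd) (i, a)

end Lex

def paley7 (a b : ZMod 7) : Prop :=
  b - a ∈ ({1, 2, 4} : Finset (ZMod 7))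

instance : DecidableRel paley7 := fun _ _ => inferInstanceAs (Decidable (_ ∈ _))

theorem isTournament_paley7 : IsTournament paley7 := by
  unfold IsTournament
  decide

def paley7TransitiveTriples : Finset (Finset (ZMod 7)) :=
  (Finset.univ.powersetCard 3).filter fun s =>
    ∀ x ∈ s, ∀ y ∈ s, ∀ z ∈ s, ¬ (paley7 x y ∧ paley7 y z ∧ paley7 z x)

theorem card_paley7TransitiveTriples : paley7TransitiveTriples.card = 21 := by
  decide +kernel

theorem paley7_inDegree_lt_of_mem_transitiveTriples :
    ∀ s ∈ paley7TransitiveTriples, ∀ a ∈ s, ∀ b ∈ s, paley7 a b →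
      (s.filter (paley7 · a)).card < (s.filter (paley7 · b)).card := by
  decide +kernel

theorem paley7_exists_triangle_of_mem_transitiveTriples :
    ∀ s ∈ paley7TransitiveTriples, ∀ v ∉ s,
      ∃ x ∈ s, ∃ y ∈ s, paley7 v x ∧ paley7 x y ∧ paley7 y v := by
  decide +kernel

theorem maximal_acyclicOn_paley7 {s : Finset (ZMod 7)} (hs : s ∈ paley7TransitiveTriples) :
    Maximal (AcyclicOn paley7) (s : Set (ZMod 7)) := by
  refine maximal_acyclicOn_iff.2 ⟨acyclicOn_of_rank (fun a => (s.filter (paley7 · a)).card)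
    (paley7_inDegree_lt_of_mem_transitiveTriples s hs), fun v hv => ?_⟩
  obtain ⟨x, hx, y, hy, hvx, hxy, hyv⟩ :=
    paley7_exists_triangle_of_mem_transitiveTriples s hs v hv
  exact not_acyclicOn_of_triangle (Set.mem_insert v _) (.inr hx) (.inr hy) hvx hxy hyv

theorem twentyOne_le_fvsCount_paley7 : 21 ≤ fvsCount (ZMod 7) paley7 := by
  rw [fvsCount_eq_ncard_maximal_acyclicOn, ← card_paley7TransitiveTriples, ← Set.ncard_coe_finset]
  exact Set.ncard_le_ncard_of_injOn (↑) (fun s hs => maximal_acyclicOn_paley7 hs)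
    Finset.coe_injective.injOn (Set.toFinite _)

theorem stmt10_general (k : ℕ) :
    ∃ r : Fin (7 * k) → Fin (7 * k) → Prop, IsTournament r ∧
      21 ^ k ≤ {F : Set (Fin (7 * k)) | IsMinimalFVS r F}.ncard := by
  let e : Fin (7 * k) ≃ Fin k × ZMod 7 := (finCongr (mul_comm 7 k)).trans finProdFinEquiv.symm
  refine ⟨e ⁻¹'o seqComp (Fin k) paley7, isTournament_paley7.seqComp.preimage e.injective, ?_⟩
  calc 21 ^ k ≤ fvsCount (ZMod 7) paley7 ^ Nat.card (Fin k) := by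
        rw [Nat.card_fin]
        exact Nat.pow_le_pow_left twentyOne_le_fvsCount_paley7 k
    _ ≤ fvsCount (Fin k × ZMod 7) (seqComp (Fin k) paley7) := pow_fvsCount_le_fvsCount_seqComp
    _ = fvsCount (Fin (7 * k)) (e ⁻¹'o seqComp (Fin k) paley7) := (fvsCount_preimage_equiv e).symm

/-- For every `k ≥ 1` there is a tournament on `n = 7k` vertices with at least
`21^(n/7) = 21^k` minimal feedback vertex sets. -/
theorem stmt10 (k : ℕ) (hk : 1 ≤ k) :
    ∃ r : Fin (7 * k) → Fin (7 * k) → Prop, IsTournament r ∧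
      21 ^ k ≤ {F : Set (Fin (7 * k)) | IsMinimalFVS r F}.ncard :=
  stmt10_general k
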